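/- arXiv:2604.27579 — 2 statements merged into one kernel-verified Lean document; each statement's English description precedes it below -/
import Mathlib

section
/- Let η₁, η₂ > 0 and N > 0. Then the double integral ∫₀^∞ ∫₀^{η₁x/η₂} (1/N²) e^{-(x+y)/N} (1 - η₂y/(η₁x)) dy dx equals 1 - (η₂/η₁)·log(1 + η₁/η₂). -/
open MeasureTheory Real Set

/-!
For fixed `x > 0` the inner integral is elementary and equals
`e^{-x/N}/N - (η₂/η₁) (e^{-x/N} - e^{-(1 + η₁/η₂) x/N}) / x`.
The first term integrates to `1`; the second is a Frullani integral
`∫₀^∞ (e^{-a x} - e^{-b x}) / x dx = log (b / a)` with `b / a = 1 + η₁/η₂`.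
-/

theorem intervalIntegral_exp_neg_div_mul_one_sub_div {N b : ℝ} (hN : N ≠ 0) (hb : b ≠ 0) :
    ∫ y in (0:ℝ)..b, exp (-y / N) * (1 - y / b) = N - N ^ 2 * (1 - exp (-b / N)) / b := by
  have hderiv : ∀ y ∈ uIcc 0 b, HasDerivAt (fun y => exp (-y / N) * (N * y / b + N ^ 2 / b - N))
      (exp (-y / N) * (1 - y / b)) y := by
    intro y _
    have h₁ : HasDerivAt (fun y => exp (-y / N)) (exp (-y / N) * (-1 / N)) y :=
      ((hasDerivAt_neg y).div_const N).exp
    have h₂ : HasDerivAt (fun y => N * y / b + N ^ 2 / b - N) (N * 1 / b) y :=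
      ((((hasDerivAt_id' y).const_mul N).div_const b).add_const _).sub_const _
    exact (h₁.mul h₂).congr_deriv (by field_simp; ring)
  rw [intervalIntegral.integral_eq_sub_of_hasDerivAt hderiv
    ((by fun_prop : Continuous fun y => exp (-y / N) * (1 - y / b)).intervalIntegrable _ _)]
  simp only [neg_zero, zero_div, exp_zero]
  field_simp
  ring

theorem integrableOn_inv_mul_exp_neg_mul_sub {a b : ℝ} (ha : 0 < a) (hb : 0 < b) :
    IntegrableOn (fun x => x⁻¹ * (exp (-a * x) - exp (-b * x))) (Ioi 0) := by
  wlog hab : a ≤ b generalizing a b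
  · exact (this hb ha (le_of_not_ge hab)).neg.congr_fun
      (fun x _ => by simp only [Pi.neg_apply]; ring) measurableSet_Ioi
  refine Integrable.mono' ((exp_neg_integrableOn_Ioi 0 ha).const_mul (b - a))
    (by fun_prop : Measurable _).aestronglyMeasurable ?_
  filter_upwards [ae_restrict_mem measurableSet_Ioi] with x (hx : 0 < x)
  -- `exp (-a x) - exp (-b x) = exp (-a x) (1 - exp (-(b - a) x))` and `1 - exp (-t) ≤ t`,
  -- so the integrand is dominated by `(b - a) exp (-a x)`.
  have hdiff : exp (-a * x) - exp (-b * x) ≤ (b - a) * x * exp (-a * x) := by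
    have h := add_one_le_exp (-((b - a) * x))
    have hsplit : exp (-b * x) = exp (-a * x) * exp (-((b - a) * x)) := by
      rw [← exp_add]; ring_nf
    rw [hsplit]
    nlinarith [exp_pos (-a * x)]
  have hnonneg : 0 ≤ exp (-a * x) - exp (-b * x) :=
    sub_nonneg.2 (exp_le_exp.2 (by nlinarith))
  rw [Real.norm_eq_abs, abs_of_nonneg (by positivity), inv_mul_le_iff₀ hx]
  linarith

theorem integral_inv_mul_exp_neg_mul_sub {a b : ℝ} (ha : 0 < a) (hb : 0 < b) :
    ∫ x in Ioi 0, x⁻¹ * (exp (-a * x) - exp (-b * x)) = log (b / a) := by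
  have h := Frullani.integral_Ioi_eq (f := fun u => exp (-u)) (L := 1) (R := 0)
    ((by fun_prop : Continuous fun u : ℝ => exp (-u)).locallyIntegrable.locallyIntegrableOn _)
    ha hb ?_ ?_ ?_
  · simpa [neg_mul] using h
  · exact ((by fun_prop : Continuous fun u : ℝ => exp (-u)).tendsto' 0 1 (by simp)).mono_left
      nhdsWithin_le_nhds
  · exact tendsto_exp_neg_atTop_nhds_zero
  · simpa [neg_mul] using integrableOn_inv_mul_exp_neg_mul_sub ha hb

theorem setIntegral_Ioc_exp_mul_one_sub_div {η₁ η₂ N x : ℝ} (hη₁ : 0 < η₁) (hη₂ : 0 < η₂)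
    (hN : N ≠ 0) (hx : 0 < x) :
    ∫ y in Ioc 0 (η₁ * x / η₂), 1 / N ^ 2 * exp (-(x + y) / N) * (1 - η₂ * y / (η₁ * x))
      = N⁻¹ * exp (-N⁻¹ * x)
        - η₂ / η₁ * (x⁻¹ * (exp (-N⁻¹ * x) - exp (-((1 + η₁ / η₂) * N⁻¹) * x))) := by
  set b := η₁ * x / η₂ with hb_def
  have hb : 0 < b := by positivity
  have hsplit (y : ℝ) : exp (-(x + y) / N) = exp (-N⁻¹ * x) * exp (-y / N) := by
    rw [← exp_add]; ring_nf
  calc _ = ∫ y in (0:ℝ)..b, N⁻¹ ^ 2 * exp (-N⁻¹ * x) * (exp (-y / N) * (1 - y / b)) := by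
        rw [intervalIntegral.integral_of_le hb.le]
        congr 1; ext y
        rw [hsplit, hb_def]
        field_simp
    _ = N⁻¹ ^ 2 * exp (-N⁻¹ * x) * (N - N ^ 2 * (1 - exp (-b / N)) / b) := by
        rw [intervalIntegral.integral_const_mul,
          intervalIntegral_exp_neg_div_mul_one_sub_div hN hb.ne']
    _ = _ := by
        have hprod : exp (-N⁻¹ * x) * exp (-b / N) = exp (-((1 + η₁ / η₂) * N⁻¹) * x) := by
          rw [← exp_add, hb_def]; ring_nf
        rw [← hprod, hb_def]
        field_simp

/-- The double integral computing the average minimum detection error probability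
in covert mode equals `1 - (η₂/η₁)·log(1 + η₁/η₂)`. -/
theorem stmt_0 (η₁ η₂ N : ℝ) (hη₁ : 0 < η₁) (hη₂ : 0 < η₂) (hN : 0 < N) :
    (∫ x in Ioi (0:ℝ), ∫ y in Ioc (0:ℝ) (η₁ * x / η₂),
        (1 / N ^ 2) * Real.exp (-(x + y) / N) * (1 - η₂ * y / (η₁ * x)))
      = 1 - (η₂ / η₁) * Real.log (1 + η₁ / η₂) := by
  have hN' : 0 < N⁻¹ := inv_pos.2 hN
  have hb : 0 < (1 + η₁ / η₂) * N⁻¹ := by positivity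
  rw [setIntegral_congr_fun measurableSet_Ioi
      (fun x hx => setIntegral_Ioc_exp_mul_one_sub_div hη₁ hη₂ hN.ne' hx),
    integral_sub ((exp_neg_integrableOn_Ioi 0 hN').const_mul _)
      ((integrableOn_inv_mul_exp_neg_mul_sub hN' hb).const_mul _),
    integral_const_mul, integral_const_mul, integral_inv_mul_exp_neg_mul_sub hN' hb,
    mul_div_cancel_right₀ _ hN'.ne', integral_exp_mul_Ioi (neg_neg_of_pos hN'),
    mul_zero, exp_zero, neg_div_neg_eq, mul_one_div_cancel hN'.ne']
end

section
/- Let X and Y be positive random variables with E[|log₂ X|] < ∞ and E[|log₂ Y|] < ∞, and let a, b > 0. Then lim_{ρ→∞} E[log₂((1 + aρX)/(1 + bρY))] = log₂(a/b) + E[log₂ X] - E[log₂ Y]. In particular, this limit is finite, so the high-SNR slope lim_{ρ→∞} E[log₂((1+aρX)/(1+bρY))]/log₂(ρ) equals 0. -/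
/-!
For `x > 0` one has `logb B (1 + x) = logb B x + softplus B (-logb B x)`, where the base-`B`
softplus `t ↦ logb B (1 + B ^ t)` is nonnegative, monotone, bounded by `logb B 2 + |t|` and tends
to `0` at `-∞`. Hence `E[logb (1 + aρZ)] = logb ρ + logb a + E[logb Z] + o(1)`: the correction term
is `softplus (-logb (aρ) - logb Z)`, which is dominated by `logb B 2 + |logb Z|` once `aρ ≥ 1`.
The `logb ρ` terms of numerator and denominator cancel, so the secrecy rate converges to a finite
limit and its slope against `logb ρ` vanishes.
-/

open MeasureTheory Filter Real Topology

noncomputable def softplus (B t : ℝ) : ℝ := logb B (1 + B ^ t)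

section Softplus

variable {B : ℝ}

lemma softplus_nonneg (hB : 1 < B) (t : ℝ) : 0 ≤ softplus B t :=
  logb_nonneg hB (le_add_of_nonneg_right (rpow_nonneg (by linarith) t))

lemma softplus_mono (hB : 1 < B) : Monotone (softplus B) := fun _ _ hst =>
  logb_le_logb_of_le hB (by positivity)
    (add_le_add_right (rpow_le_rpow_of_exponent_le hB.le hst) 1)

lemma continuous_softplus (hB : 0 < B) : Continuous (softplus B) :=
  (continuous_const.add (continuous_const.rpow continuous_id fun _ => Or.inl hB.ne')).logb
    fun t => (add_pos one_pos (rpow_pos_of_pos hB t)).ne'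

lemma softplus_le (hB : 1 < B) (t : ℝ) : softplus B t ≤ logb B 2 + |t| := by
  have hB₀ : 0 < B := by linarith
  calc softplus B t ≤ logb B (2 * B ^ |t|) := by
        refine logb_le_logb_of_le hB (by positivity) ?_
        have h₁ : 1 ≤ B ^ |t| := one_le_rpow hB.le (abs_nonneg t)
        have h₂ : B ^ t ≤ B ^ |t| := rpow_le_rpow_of_exponent_le hB.le (le_abs_self t)
        linarith
    _ = logb B 2 + |t| := by
        rw [logb_mul two_ne_zero (by positivity), logb_rpow hB₀ hB.ne']

lemma tendsto_softplus_atBot (hB : 1 < B) : Tendsto (softplus B) atBot (𝓝 0) := by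
  have h := (tendsto_rpow_atBot_of_base_gt_one B hB).const_add 1
  rw [add_zero] at h
  have h' := (continuousAt_logb (b := B) one_ne_zero).tendsto.comp h
  rwa [logb_one] at h'

lemma logb_one_add_eq_logb_add_softplus (hB₀ : 0 < B) (hB₁ : B ≠ 1) {x : ℝ} (hx : 0 < x) :
    logb B (1 + x) = logb B x + softplus B (-logb B x) := by
  rw [softplus, rpow_neg hB₀.le, rpow_logb hB₀ hB₁ hx, ← logb_mul hx.ne' (by positivity)]
  congr 1
  field_simp
  ring

lemma logb_one_add_mul_eq (hB₀ : 0 < B) (hB₁ : B ≠ 1) {c x : ℝ} (hc : 0 < c) (hx : 0 < x) :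
    logb B (1 + c * x) = logb B c + logb B x + softplus B (-logb B c - logb B x) := by
  rw [logb_one_add_eq_logb_add_softplus hB₀ hB₁ (mul_pos hc hx), logb_mul hc.ne' hx.ne', neg_add']

end Softplus

section Integral

variable {Ω : Type*} [MeasurableSpace Ω] {μ : Measure Ω} {B : ℝ}

lemma integrable_softplus_sub [IsFiniteMeasure μ] (hB : 1 < B) {L : Ω → ℝ}
    (hL : Integrable L μ) (s : ℝ) : Integrable (fun ω => softplus B (s - L ω)) μ := by
  refine Integrable.mono' ((integrable_const (logb B 2 + |s|)).add hL.abs)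
    ((continuous_softplus (by linarith)).comp_aestronglyMeasurable
      (aestronglyMeasurable_const.sub hL.aestronglyMeasurable)) (Eventually.of_forall fun ω => ?_)
  rw [norm_of_nonneg (softplus_nonneg hB _)]
  calc softplus B (s - L ω) ≤ logb B 2 + |s - L ω| := softplus_le hB _
    _ ≤ logb B 2 + |s| + |L ω| := by linarith [abs_sub s (L ω)]

lemma tendsto_integral_softplus_sub_atBot [IsFiniteMeasure μ] (hB : 1 < B) {L : Ω → ℝ}
    (hL : Integrable L μ) :
    Tendsto (fun s => ∫ ω, softplus B (s - L ω) ∂μ) atBot (𝓝 0) := by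
  have hbound : ∀ᶠ s in atBot, ∀ᵐ ω ∂μ, ‖softplus B (s - L ω)‖ ≤ logb B 2 + |L ω| := by
    filter_upwards [eventually_le_atBot 0] with s hs
    refine Eventually.of_forall fun ω => ?_
    rw [norm_of_nonneg (softplus_nonneg hB _)]
    calc softplus B (s - L ω) ≤ softplus B (-L ω) := softplus_mono hB (by linarith)
      _ ≤ logb B 2 + |L ω| := by simpa using softplus_le hB (-L ω)
  have hlim : ∀ ω, Tendsto (fun s => softplus B (s - L ω)) atBot (𝓝 0) := fun ω =>
    (tendsto_softplus_atBot hB).comp (tendsto_atBot_add_const_right _ _ tendsto_id)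
  simpa using tendsto_integral_filter_of_dominated_convergence _
    (Eventually.of_forall fun s => (integrable_softplus_sub hB hL s).aestronglyMeasurable)
    hbound ((integrable_const _).add hL.abs) (Eventually.of_forall hlim)

variable {Z : Ω → ℝ}

lemma integrable_logb_one_add_mul [IsFiniteMeasure μ] (hB : 1 < B) (hZ : ∀ᵐ ω ∂μ, 0 < Z ω)
    (hlogZ : Integrable (fun ω => logb B (Z ω)) μ) {c : ℝ} (hc : 0 < c) :
    Integrable (fun ω => logb B (1 + c * Z ω)) μ := by
  refine (((integrable_const (logb B c)).add hlogZ).add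
    (integrable_softplus_sub hB hlogZ (-logb B c))).congr ?_
  filter_upwards [hZ] with ω hω
  exact (logb_one_add_mul_eq (by linarith) hB.ne' hc hω).symm

lemma integral_logb_one_add_mul [IsProbabilityMeasure μ] (hB : 1 < B) (hZ : ∀ᵐ ω ∂μ, 0 < Z ω)
    (hlogZ : Integrable (fun ω => logb B (Z ω)) μ) {c : ℝ} (hc : 0 < c) :
    ∫ ω, logb B (1 + c * Z ω) ∂μ =
      logb B c + ∫ ω, logb B (Z ω) ∂μ + ∫ ω, softplus B (-logb B c - logb B (Z ω)) ∂μ := by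
  have hconst_add : Integrable (fun ω => logb B c + logb B (Z ω)) μ :=
    (integrable_const _).add hlogZ
  rw [integral_congr_ae (hZ.mono fun ω hω => logb_one_add_mul_eq (by linarith) hB.ne' hc hω),
    integral_add hconst_add (integrable_softplus_sub hB hlogZ _),
    integral_add (integrable_const _) hlogZ, integral_const, probReal_univ, one_smul]

theorem tendsto_integral_logb_one_add_mul_sub_logb [IsProbabilityMeasure μ] (hB : 1 < B)
    (hZ : ∀ᵐ ω ∂μ, 0 < Z ω) (hlogZ : Integrable (fun ω => logb B (Z ω)) μ) {a : ℝ} (ha : 0 < a) :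
    Tendsto (fun ρ => ∫ ω, logb B (1 + a * ρ * Z ω) ∂μ - logb B ρ) atTop
      (𝓝 (logb B a + ∫ ω, logb B (Z ω) ∂μ)) := by
  have hs : Tendsto (fun ρ => -logb B (a * ρ)) atTop atBot :=
    tendsto_neg_atTop_atBot.comp ((tendsto_logb_atTop hB).comp (tendsto_id.const_mul_atTop ha))
  have h := ((tendsto_integral_softplus_sub_atBot hB hlogZ).comp hs).const_add
    (logb B a + ∫ ω, logb B (Z ω) ∂μ)
  rw [add_zero] at h
  refine h.congr' ?_
  filter_upwards [eventually_gt_atTop 0] with ρ hρ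
  rw [Function.comp_apply, integral_logb_one_add_mul hB hZ hlogZ (mul_pos ha hρ),
    logb_mul ha.ne' hρ.ne']
  ring

end Integral

theorem stmt_9_general {Ω : Type*} [MeasurableSpace Ω] (μ : Measure Ω) [IsProbabilityMeasure μ]
    (X Y : Ω → ℝ)
    (hX0 : ∀ᵐ ω ∂μ, 0 < X ω) (hY0 : ∀ᵐ ω ∂μ, 0 < Y ω)
    (hlogX : Integrable (fun ω => Real.logb 2 (X ω)) μ)
    (hlogY : Integrable (fun ω => Real.logb 2 (Y ω)) μ)
    (a b : ℝ) (ha : 0 < a) (hb : 0 < b) :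
    Tendsto (fun ρ : ℝ => ∫ ω, Real.logb 2 ((1 + a * ρ * X ω) / (1 + b * ρ * Y ω)) ∂μ)
      atTop
      (nhds (Real.logb 2 (a / b) + (∫ ω, Real.logb 2 (X ω) ∂μ)
        - ∫ ω, Real.logb 2 (Y ω) ∂μ)) ∧
    Tendsto (fun ρ : ℝ =>
        (∫ ω, Real.logb 2 ((1 + a * ρ * X ω) / (1 + b * ρ * Y ω)) ∂μ) / Real.logb 2 ρ)
      atTop (nhds 0) := by
  suffices hlim : Tendsto
      (fun ρ : ℝ => ∫ ω, logb 2 ((1 + a * ρ * X ω) / (1 + b * ρ * Y ω)) ∂μ) atTop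
      (𝓝 (logb 2 (a / b) + (∫ ω, logb 2 (X ω) ∂μ) - ∫ ω, logb 2 (Y ω) ∂μ)) from
    ⟨hlim, hlim.div_atTop (tendsto_logb_atTop one_lt_two)⟩
  have hlimit : logb 2 a + (∫ ω, logb 2 (X ω) ∂μ) - (logb 2 b + ∫ ω, logb 2 (Y ω) ∂μ) =
      logb 2 (a / b) + (∫ ω, logb 2 (X ω) ∂μ) - ∫ ω, logb 2 (Y ω) ∂μ := by
    rw [logb_div ha.ne' hb.ne']
    ring
  rw [← hlimit]
  refine ((tendsto_integral_logb_one_add_mul_sub_logb one_lt_two hX0 hlogX ha).sub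
    (tendsto_integral_logb_one_add_mul_sub_logb one_lt_two hY0 hlogY hb)).congr' ?_
  filter_upwards [eventually_gt_atTop 0] with ρ hρ
  have hdiv : ∀ᵐ ω ∂μ, logb 2 ((1 + a * ρ * X ω) / (1 + b * ρ * Y ω)) =
      logb 2 (1 + a * ρ * X ω) - logb 2 (1 + b * ρ * Y ω) := by
    filter_upwards [hX0, hY0] with ω hx hy
    exact logb_div (by positivity) (by positivity)
  rw [sub_sub_sub_cancel_right, integral_congr_ae hdiv, integral_sub
    (integrable_logb_one_add_mul one_lt_two hX0 hlogX (mul_pos ha hρ))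
    (integrable_logb_one_add_mul one_lt_two hY0 hlogY (mul_pos hb hρ))]

/-- High-SNR saturation of the secrecy ergodic rate, and zero high-SNR slope. -/
theorem stmt_9 {Ω : Type*} [MeasurableSpace Ω] (μ : Measure Ω) [IsProbabilityMeasure μ]
    (X Y : Ω → ℝ) (hXmeas : Measurable X) (hYmeas : Measurable Y)
    (hX0 : ∀ᵐ ω ∂μ, 0 < X ω) (hY0 : ∀ᵐ ω ∂μ, 0 < Y ω)
    (hlogX : Integrable (fun ω => Real.logb 2 (X ω)) μ)
    (hlogY : Integrable (fun ω => Real.logb 2 (Y ω)) μ)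
    (a b : ℝ) (ha : 0 < a) (hb : 0 < b) :
    Tendsto (fun ρ : ℝ => ∫ ω, Real.logb 2 ((1 + a * ρ * X ω) / (1 + b * ρ * Y ω)) ∂μ)
      atTop
      (nhds (Real.logb 2 (a / b) + (∫ ω, Real.logb 2 (X ω) ∂μ)
        - ∫ ω, Real.logb 2 (Y ω) ∂μ)) ∧
    Tendsto (fun ρ : ℝ =>
        (∫ ω, Real.logb 2 ((1 + a * ρ * X ω) / (1 + b * ρ * Y ω)) ∂μ) / Real.logb 2 ρ)
      atTop (nhds 0) :=
  stmt_9_general μ X Y hX0 hY0 hlogX hlogY a b ha hb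
end
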